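/- arXiv:2312.15424 — 2 statements merged into one kernel-verified Lean document; each statement's English description precedes it below -/
import Mathlib

section
/- Equivalence identity for renewable units: at an optimal primal-dual solution, for a renewable unit in scenario k at time t, the combined settlement Π^U + Π^D := π^{u,w}_k · r^{u,w} + π^{u,w}_k · φ^{w,+}_k + π^{d,w}_k · r^{d,w} − π^w_k · φ^{w,-}_k equals π^w_k · (δw⁺_k − δw⁻_k), i.e., the net re-dispatch settled at the scenario fractional energy price. -/
/-!
The upward and downward sides settle separately. On each side, complementary slackness at the
upper bound trades the reserve award for the re-dispatch, and stationarity combined with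
slackness at the lower bound trades the reserve price for the energy price.
-/

theorem up_reserve_settlement_eq_energy (r δ φ τbar τlow π : ℝ)
    (hstat : τbar - τlow - π = 0) (hhi : τbar * (δ - r - φ) = 0) (hlo : τlow * δ = 0) :
    τbar * r + τbar * φ = π * δ := by
  linear_combination -hhi + δ * hstat + hlo

theorem down_reserve_settlement_eq_energy (r δ φ ζbar ζlow π : ℝ)
    (hstat : ζbar - ζlow + π = 0) (hhi : ζbar * (δ - φ - r) = 0) (hlo : ζlow * (δ - φ) = 0) :
    ζbar * r = -π * (δ - φ) := by
  linear_combination -hhi + (δ - φ) * hstat + hlo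

/-- Equivalence identity for renewable units: at an optimal primal-dual solution, for a
renewable unit in scenario `k`, the combined settlement
`π^{u,w}·r^{u,w} + π^{u,w}·φ⁺ + π^{d,w}·r^{d,w} − π^w·φ⁻` equals the net re-dispatch
settled at the scenario fractional energy price, `π^w·(δw⁺ − δw⁻)`. -/
theorem equivalence_renewable
    (ruw rdw δp δm φp φm : ℝ)               -- reserves, re-dispatch, deviations
    (τbar τlow ζbar ζlow πw : ℝ)            -- KKT multipliers and scenario price
    (hstat_up : τbar - τlow - πw = 0)        -- stationarity in δw⁺
    (hstat_dn : ζbar - ζlow + πw = 0)        -- stationarity in δw⁻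
    (hcs_up_hi : τbar * (δp - ruw - φp) = 0) -- complementary slackness
    (hcs_up_lo : τlow * δp = 0)
    (hcs_dn_hi : ζbar * (δm - φm - rdw) = 0)
    (hcs_dn_lo : ζlow * (δm - φm) = 0) :
    τbar * ruw + τbar * φp + ζbar * rdw - πw * φm = πw * (δp - δm) := by
  have hup := up_reserve_settlement_eq_energy ruw δp φp τbar τlow πw hstat_up hcs_up_hi hcs_up_lo
  have hdn := down_reserve_settlement_eq_energy rdw δm φm ζbar ζlow πw hstat_dn hcs_dn_hi hcs_dn_lo
  linear_combination hup + hdn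
end

section
/- Energy-reserve revenue identity for renewable units: at an optimal primal-dual solution, for a renewable unit at time t, the combined ex-ante credit π^w_t · w_t + π^{u,w}_t · r^{u,w}_t + π^{d,w}_t · r^{d,w}_t equals ῑ^U_t · W̄_t, the product of the multiplier of the upper capacity bound and the maximum available output. -/
theorem renewable_revenue_identity_general
    (w ruw rdw Wbar : ℝ)                       -- dispatch, reserves, capacity
    (ιUbar ιUlow ιDbar ιDlow : ℝ)              -- KKT multipliers
    (πw πu πd : ℝ)                             -- prices
    (hstat_w : -πw + ιUbar - ιDbar = 0)        -- stationarity in w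
    (hstat_u : -πu + ιUbar - ιUlow = 0)        -- stationarity in r^{u,w}
    (hstat_d : -πd + ιDbar - ιDlow = 0)        -- stationarity in r^{d,w}
    (hcs_U_hi : ιUbar * (ruw - Wbar + w) = 0)  -- complementary slackness
    (hcs_U_lo : ιUlow * ruw = 0)
    (hcs_D_hi : ιDbar * (rdw - w) = 0)
    (hcs_D_lo : ιDlow * rdw = 0) :
    πw * w + πu * ruw + πd * rdw = ιUbar * Wbar := by
  -- Stationarity expresses each price through the multipliers; complementary slackness then
  -- turns every multiplier-times-quantity product into multiplier-times-bound.
  linear_combination -w * hstat_w - ruw * hstat_u - rdw * hstat_d + hcs_U_hi - hcs_U_lo +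
    hcs_D_hi - hcs_D_lo

/-- Energy-reserve revenue identity for renewable units: at an optimal primal-dual
solution, the combined ex-ante credit `π^w w + π^{u,w} r^{u,w} + π^{d,w} r^{d,w}`
equals `ῑ^U W̄`, the upper-capacity multiplier times the maximum available output. -/
theorem renewable_revenue_identity
    (w ruw rdw Wbar : ℝ)                       -- dispatch, reserves, capacity
    (ιUbar ιUlow ιDbar ιDlow : ℝ)              -- KKT multipliers
    (πw πu πd : ℝ)                             -- prices
    (hιUbar : 0 ≤ ιUbar) (hιUlow : 0 ≤ ιUlow) (hιDbar : 0 ≤ ιDbar) (hιDlow : 0 ≤ ιDlow)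
    (hWbar : 0 ≤ Wbar)
    (hstat_w : -πw + ιUbar - ιDbar = 0)        -- stationarity in w
    (hstat_u : -πu + ιUbar - ιUlow = 0)        -- stationarity in r^{u,w}
    (hstat_d : -πd + ιDbar - ιDlow = 0)        -- stationarity in r^{d,w}
    (hcs_U_hi : ιUbar * (ruw - Wbar + w) = 0)  -- complementary slackness
    (hcs_U_lo : ιUlow * ruw = 0)
    (hcs_D_hi : ιDbar * (rdw - w) = 0)
    (hcs_D_lo : ιDlow * rdw = 0) :
    πw * w + πu * ruw + πd * rdw = ιUbar * Wbar :=
  renewable_revenue_identity_general w ruw rdw Wbar ιUbar ιUlow ιDbar ιDlow πw πu πd hstat_w hstat_u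
    hstat_d hcs_U_hi hcs_U_lo hcs_D_hi hcs_D_lo
end
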